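/- arXiv:1503.07224 — 2 statements merged into one kernel-verified Lean document; each statement's English description precedes it below -/
import Mathlib

section
/- Let G be a finite connected graph, M ⊆ E(G) a set of measured edges such that E(G) \ M is a spanning tree, and for each spanning tree T of G and each injection vector x define the flow s(T,x) on the measured edges induced by routing x through T. Then for generic (e.g., strictly positive and linearly independent over appropriate subsets) x, distinct spanning trees T ≠ T' yield distinct measured flow vectors s(T,x) ≠ s(T',x). -/
/-!
Subtracting the two conservation laws shows that `f - f'` is a circulation. It vanishes on the
measured edges, so it is supported on the spanning tree `G \ M`, and a circulation supported on a
forest is zero: across any forest edge, the net supply of the component on one side of it equals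
the flow on that edge. Hence `f = f'`. The same cut argument, applied to the side of a tree edge
not containing the root, shows that a tree flow is nonzero on every edge of its tree, since that
side only consumes. So `T` and `T'` are both the support of the common flow.
-/

open Finset Matrix SimpleGraph

section

variable {V E : Type*} [Fintype V] [DecidableEq V]

def orientedIncMatrix (ori : E → V × V) : Matrix V E ℝ :=
  Matrix.of fun v e => if v = (ori e).1 then 1 else if v = (ori e).2 then -1 else 0

variable {ori : E → V × V}

theorem vecMul_orientedIncMatrix_apply (ι : V → ℝ) {e : E} (he : (ori e).1 ≠ (ori e).2) :
    (ι ᵥ* orientedIncMatrix ori) e = ι (ori e).1 - ι (ori e).2 := by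
  simp only [vecMul, dotProduct, orientedIncMatrix, of_apply, mul_ite, mul_one, mul_neg,
    mul_zero]
  rw [Fintype.sum_eq_add (ori e).1 (ori e).2 he (fun v hv => by simp [hv.1, hv.2])]
  simp [he.symm, sub_eq_add_neg]

variable [Fintype E]

theorem dotProduct_orientedIncMatrix_mulVec_eq_single (hloop : ∀ e, (ori e).1 ≠ (ori e).2)
    (ι : V → ℝ) (f : E → ℝ) (e₀ : E)
    (hι : ∀ e, e ≠ e₀ → f e ≠ 0 → ι (ori e).1 = ι (ori e).2) :
    ι ⬝ᵥ (orientedIncMatrix ori *ᵥ f) = f e₀ * (ι (ori e₀).1 - ι (ori e₀).2) := by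
  rw [dotProduct_mulVec, dotProduct, Finset.sum_eq_single e₀ _ (by simp),
    vecMul_orientedIncMatrix_apply ι (hloop e₀), mul_comm]
  intro e _ he
  by_cases hf : f e = 0
  · simp [hf]
  · simp [vecMul_orientedIncMatrix_apply ι (hloop e), hι e he hf]

variable {S : SimpleGraph V} {f : E → ℝ}

open Classical in
/-- Only `e₀` can cross the boundary of the component of `c` in `S` minus `e₀`, so the net
outflow of that component is the flow that `e₀` carries out of it. -/
theorem sum_reachable_orientedIncMatrix_mulVec (hloop : ∀ e, (ori e).1 ≠ (ori e).2)
    (hinj : Function.Injective fun e => s((ori e).1, (ori e).2))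
    (hsupp : ∀ e, f e ≠ 0 → s((ori e).1, (ori e).2) ∈ S.edgeSet) (e₀ : E) (c : V) :
    ∑ v with (S.deleteEdges {s((ori e₀).1, (ori e₀).2)}).Reachable c v,
        (orientedIncMatrix ori *ᵥ f) v =
      f e₀ * ((if (S.deleteEdges {s((ori e₀).1, (ori e₀).2)}).Reachable c (ori e₀).1 then 1 else 0)
        - if (S.deleteEdges {s((ori e₀).1, (ori e₀).2)}).Reachable c (ori e₀).2 then 1 else 0) := by
  set H := S.deleteEdges {s((ori e₀).1, (ori e₀).2)}
  rw [← dotProduct_orientedIncMatrix_mulVec_eq_single hloop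
    (fun v => if H.Reachable c v then 1 else 0) f e₀, Finset.sum_filter]
  · simp only [dotProduct, ite_mul, one_mul, zero_mul]
    rfl
  intro e he hfe
  have hadj : H.Adj (ori e).1 (ori e).2 := by
    rw [← mem_edgeSet, edgeSet_deleteEdges]
    exact ⟨hsupp e hfe, fun h => he (hinj h)⟩
  have : H.Reachable c (ori e).1 ↔ H.Reachable c (ori e).2 :=
    ⟨(·.trans hadj.reachable), (·.trans hadj.symm.reachable)⟩
  simp only [this]

theorem eq_zero_of_orientedIncMatrix_mulVec_eq_zero (hloop : ∀ e, (ori e).1 ≠ (ori e).2)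
    (hinj : Function.Injective fun e => s((ori e).1, (ori e).2)) (hS : S.IsAcyclic)
    (hsupp : ∀ e, f e ≠ 0 → s((ori e).1, (ori e).2) ∈ S.edgeSet)
    (hf : orientedIncMatrix ori *ᵥ f = 0) : f = 0 := by
  classical
  funext e₀
  by_contra hne
  have hbridge := isBridge_iff.mp (isAcyclic_iff_forall_adj_isBridge.mp hS (hsupp e₀ hne))
  have hcut := sum_reachable_orientedIncMatrix_mulVec hloop hinj hsupp e₀ (ori e₀).1
  simp only [hf, Pi.zero_apply, sum_const_zero, Reachable.refl, if_true, hbridge, if_false,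
    sub_zero, mul_one] at hcut
  exact hne hcut.symm

/-- The side of `e₀` away from `r` has negative net supply, which can only be fed through `e₀`. -/
theorem apply_ne_zero_of_orientedIncMatrix_mulVec_eq (hloop : ∀ e, (ori e).1 ≠ (ori e).2)
    (hinj : Function.Injective fun e => s((ori e).1, (ori e).2)) (hS : S.IsAcyclic)
    (hsupp : ∀ e, f e ≠ 0 → s((ori e).1, (ori e).2) ∈ S.edgeSet) {r : V} {y : V → ℝ}
    (hy : ∀ v, v ≠ r → y v < 0) (hf : orientedIncMatrix ori *ᵥ f = y) {e₀ : E}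
    (he₀ : s((ori e₀).1, (ori e₀).2) ∈ S.edgeSet) : f e₀ ≠ 0 := by
  classical
  set H := S.deleteEdges {s((ori e₀).1, (ori e₀).2)}
  have hbridge : ¬ H.Reachable (ori e₀).1 (ori e₀).2 :=
    isBridge_iff.mp (isAcyclic_iff_forall_adj_isBridge.mp hS he₀)
  obtain ⟨c, hcr⟩ : ∃ c, ¬ H.Reachable c r := by
    by_cases h : H.Reachable (ori e₀).1 r
    · exact ⟨(ori e₀).2, fun h' => hbridge (h.trans h'.symm)⟩
    · exact ⟨(ori e₀).1, h⟩
  have hneg : ∑ v with H.Reachable c v, y v < 0 :=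
    sum_neg (fun v hv => hy v fun hvr => hcr (hvr ▸ (mem_filter.mp hv).2)) ⟨c, by simp⟩
  rw [← hf, sum_reachable_orientedIncMatrix_mulVec hloop hinj hsupp] at hneg
  exact left_ne_zero_of_mul hneg.ne

end

section

variable {V : Type*} [Fintype V] {G : SimpleGraph V} [DecidableRel G.Adj]
  {ori : G.edgeFinset → V × V}

def IsOrientation (G : SimpleGraph V) [DecidableRel G.Adj] (ori : G.edgeFinset → V × V) : Prop :=
  ∀ e, s((ori e).1, (ori e).2) = e.1

theorem IsOrientation.fst_ne_snd (hori : IsOrientation G ori) (e : G.edgeFinset) :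
    (ori e).1 ≠ (ori e).2 :=
  (G.mem_edgeFinset.mp ((hori e).symm ▸ e.2 : s((ori e).1, (ori e).2) ∈ G.edgeFinset)).ne

theorem IsOrientation.injective (hori : IsOrientation G ori) :
    Function.Injective fun e => s((ori e).1, (ori e).2) :=
  fun e e' h => Subtype.ext ((hori e).symm.trans (h.trans (hori e')))

variable [DecidableEq V]

theorem IsOrientation.eq_of_orientedIncMatrix_mulVec_eq (hori : IsOrientation G ori)
    {M : Set (Sym2 V)} (hM : (G.deleteEdges M).IsAcyclic) {f f' : G.edgeFinset → ℝ}
    (hagree : ∀ e : G.edgeFinset, e.1 ∈ M → f e = f' e)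
    (hff' : orientedIncMatrix ori *ᵥ f = orientedIncMatrix ori *ᵥ f') : f = f' := by
  refine sub_eq_zero.mp (eq_zero_of_orientedIncMatrix_mulVec_eq_zero hori.fst_ne_snd
    hori.injective hM (fun e he => ?_) ((mulVec_sub _ f f').trans (sub_eq_zero.mpr hff')))
  rw [hori e, edgeSet_deleteEdges]
  exact ⟨G.mem_edgeFinset.mp e.2, fun hm => he (sub_eq_zero.mpr (hagree e hm))⟩

theorem IsOrientation.le_of_orientedIncMatrix_mulVec_eq (hori : IsOrientation G ori)
    {S S' : SimpleGraph V} (hSG : S ≤ G) (hS : S.IsAcyclic) {f : G.edgeFinset → ℝ}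
    (hfS : ∀ e, f e ≠ 0 → e.1 ∈ S.edgeSet) (hfS' : ∀ e, f e ≠ 0 → e.1 ∈ S'.edgeSet)
    {r : V} {y : V → ℝ} (hy : ∀ v, v ≠ r → y v < 0) (hf : orientedIncMatrix ori *ᵥ f = y) :
    S ≤ S' := by
  intro u v huv
  let e : G.edgeFinset := ⟨s(u, v), G.mem_edgeFinset.mpr (hSG huv)⟩
  exact hfS' e (apply_ne_zero_of_orientedIncMatrix_mulVec_eq hori.fst_ne_snd hori.injective hS
    (fun e he => (hori e).symm ▸ hfS e he) hy hf ((hori e).symm ▸ huv))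

end

theorem stmt_18_general {V : Type*} [Fintype V] [DecidableEq V]
    (G : SimpleGraph V) [DecidableRel G.Adj]
    (r : V) (x : V → ℝ) (hx : ∀ v, v ≠ r → 0 < x v)
    (ori : {e : Sym2 V // e ∈ G.edgeFinset} → V × V)
    (hori : ∀ e, Sym2.mk (ori e).1 (ori e).2 = e.1)
    (M : Finset (Sym2 V))
    (hM : (G.deleteEdges (M : Set (Sym2 V))).IsTree)
    (T T' : SimpleGraph V) (hTG : T ≤ G) (hT : T.IsTree) (hT'G : T' ≤ G) (hT' : T'.IsTree)
    (f f' : {e : Sym2 V // e ∈ G.edgeFinset} → ℝ)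
    (hfsupp : ∀ e, f e ≠ 0 → e.1 ∈ T.edgeSet)
    (hf'supp : ∀ e, f' e ≠ 0 → e.1 ∈ T'.edgeSet)
    (hf : (Matrix.of fun (v : V) (e : {e : Sym2 V // e ∈ G.edgeFinset}) =>
        if v = (ori e).1 then (1 : ℝ) else if v = (ori e).2 then -1 else 0).mulVec f
      = fun v => if v = r then ∑ u ∈ Finset.univ.erase r, x u else -x v)
    (hf' : (Matrix.of fun (v : V) (e : {e : Sym2 V // e ∈ G.edgeFinset}) =>
        if v = (ori e).1 then (1 : ℝ) else if v = (ori e).2 then -1 else 0).mulVec f'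
      = fun v => if v = r then ∑ u ∈ Finset.univ.erase r, x u else -x v)
    (hagree : ∀ e : {e : Sym2 V // e ∈ G.edgeFinset}, e.1 ∈ M → f e = f' e) :
    T = T' := by
  have hy (v : V) (hv : v ≠ r) :
      (fun v => if v = r then ∑ u ∈ Finset.univ.erase r, x u else -x v) v < 0 := by
    simpa [hv] using hx v hv
  have hff' : f = f' :=
    IsOrientation.eq_of_orientedIncMatrix_mulVec_eq hori hM.isAcyclic hagree (hf.trans hf'.symm)
  exact le_antisymm
    (IsOrientation.le_of_orientedIncMatrix_mulVec_eq hori hTG hT.isAcyclic hfsupp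
      (hff' ▸ hf'supp) hy hf)
    (IsOrientation.le_of_orientedIncMatrix_mulVec_eq hori hT'G hT'.isAcyclic hf'supp
      (hff' ▸ hfsupp) hy hf')

/-- Identifiability (sufficiency): let `G` be a finite connected graph with root `r`,
strictly positive consumptions `x v` at the non-root vertices, an arbitrary orientation of
the edges with signed incidence matrix `B`, and a valid sensor placement `M` (i.e.
`E(G) \ M` is a spanning tree). For a spanning tree `T`, the flow routed through `T` is the
vector `f` supported on the edges of `T` satisfying the conservation law `B f = y`, where
`y r = ∑_{v ≠ r} x v` and `y v = -x v` otherwise. If the flows of two spanning trees agree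
(in sign and magnitude) on all measured edges, then the trees are equal. -/
theorem stmt_18 {V : Type*} [Fintype V] [DecidableEq V]
    (G : SimpleGraph V) [DecidableRel G.Adj] (hG : G.Connected)
    (r : V) (x : V → ℝ) (hx : ∀ v, v ≠ r → 0 < x v)
    (ori : {e : Sym2 V // e ∈ G.edgeFinset} → V × V)
    (hori : ∀ e, Sym2.mk (ori e).1 (ori e).2 = e.1)
    (M : Finset (Sym2 V)) (hMG : M ⊆ G.edgeFinset)
    (hM : (G.deleteEdges (M : Set (Sym2 V))).IsTree)
    (T T' : SimpleGraph V) (hTG : T ≤ G) (hT : T.IsTree) (hT'G : T' ≤ G) (hT' : T'.IsTree)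
    (f f' : {e : Sym2 V // e ∈ G.edgeFinset} → ℝ)
    (hfsupp : ∀ e, f e ≠ 0 → e.1 ∈ T.edgeSet)
    (hf'supp : ∀ e, f' e ≠ 0 → e.1 ∈ T'.edgeSet)
    (hf : (Matrix.of fun (v : V) (e : {e : Sym2 V // e ∈ G.edgeFinset}) =>
        if v = (ori e).1 then (1 : ℝ) else if v = (ori e).2 then -1 else 0).mulVec f
      = fun v => if v = r then ∑ u ∈ Finset.univ.erase r, x u else -x v)
    (hf' : (Matrix.of fun (v : V) (e : {e : Sym2 V // e ∈ G.edgeFinset}) =>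
        if v = (ori e).1 then (1 : ℝ) else if v = (ori e).2 then -1 else 0).mulVec f'
      = fun v => if v = r then ∑ u ∈ Finset.univ.erase r, x u else -x v)
    (hagree : ∀ e : {e : Sym2 V // e ∈ G.edgeFinset}, e.1 ∈ M → f e = f' e) :
    T = T' :=
  stmt_18_general G r x hx ori hori M hM T T' hTG hT hT'G hT' f f' hfsupp hf'supp hf hf' hagree
end

section
/- Let G be a finite connected graph and M ⊆ E(G) a set of measured edges such that E(G) \ M contains a cycle (i.e., is not a spanning forest complement making M cover all cycles). Then there exist two distinct spanning trees T ≠ T' of G whose measured flow vectors coincide for every injection vector x: s(T,x) = s(T',x) for all x. -/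
/-!
Let `C` be a cycle of `G` avoiding `M`. Take a spanning tree `T` containing all of `C` except
one edge `ab`, and exchange an edge of the `T`-path from `a` to `b` for `ab` to get a second
spanning tree `T'`. Two flows with the same divergence, supported on `T` and on `T'`, differ by
a circulation supported on `T + ab`. A circulation vanishes on every bridge, and in `T + ab`
every edge off `C` is a bridge; in particular it vanishes on `M`.
-/

namespace SimpleGraph

variable {V : Type*} {G H T : SimpleGraph V}

theorem reachable_le_of_adj_le_reachable (h : G.Adj ≤ H.Reachable) :
    G.Reachable ≤ H.Reachable := by
  simp only [reachable_eq_reflTransGen] at h ⊢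
  exact Relation.reflTransGen_closed h

theorem reachable_sup_edge_of_reachable {a b : V} (hab : G.Reachable a b) :
    (G ⊔ edge a b).Reachable = G.Reachable := by
  refine le_antisymm (reachable_le_of_adj_le_reachable fun x y hxy => ?_)
    (Reachable.mono' le_sup_left)
  rcases hxy with hxy | hxy
  · exact hxy.reachable
  · obtain ⟨⟨rfl, rfl⟩ | ⟨rfl, rfl⟩, -⟩ := (edge_adj ..).mp hxy
    exacts [hab, hab.symm]

theorem IsBridge.sup_edge_of_reachable {e : Sym2 V} {a b : V} (he : G.IsBridge e)
    (hab : (G.deleteEdges {e}).Reachable a b) : (G ⊔ edge a b).IsBridge e := by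
  induction e with | h u v => ?_
  rw [isBridge_iff] at he
  rw [isBridge_iff, deleteEdges_sup]
  intro huv
  refine he ?_
  rw [← reachable_sup_edge_of_reachable hab]
  exact huv.mono (sup_le_sup_left (deleteEdges_le _) _)

theorem IsAcyclic.isBridge_sup_edge {e : Sym2 V} {a b : V} (hT : T.IsAcyclic)
    (he : e ∈ T.edgeSet) (p : T.Walk a b) (hep : e ∉ p.edges) : (T ⊔ edge a b).IsBridge e :=
  (isAcyclic_iff_forall_isBridge.mp hT he).sup_edge_of_reachable
    ⟨p.toDeleteEdges {e} fun _ he' h => hep (Set.mem_singleton_iff.mp h ▸ he')⟩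

theorem IsAcyclic.not_adj_of_reachable {a b : V} (hT : T.IsAcyclic) (hGT : G ≤ T)
    (hreach : G.Reachable a b) (hab : ¬G.Adj a b) : ¬T.Adj a b := by
  intro hTab
  refine isAcyclic_iff_forall_adj_isBridge.mp hT hTab (hreach.mono fun x y hxy => ?_)
  refine deleteEdges_adj.mpr ⟨hGT hxy, fun h => hab ?_⟩
  rw [← mem_edgeSet, ← Set.mem_singleton_iff.mp h]
  exact hxy

theorem IsTree.sup_edge_deleteEdges {a b : V} {e : Sym2 V} (hT : T.IsTree) (p : T.Walk a b)
    (hp : p.IsPath) (hab : ¬T.Adj a b) (he : e ∈ p.edges) :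
    (T.deleteEdges {e} ⊔ edge a b).IsTree := by
  induction e with | h u w => ?_
  have hne : a ≠ b := by
    rintro rfl
    rw [Walk.edges_eq_nil.mpr (Walk.isPath_iff_nil.mp hp)] at he
    exact List.not_mem_nil he
  have hcycle : (Walk.cons (show (T ⊔ edge a b).Adj b a from Or.inr ((edge_adj ..).mpr
      ⟨Or.inr ⟨rfl, rfl⟩, hne.symm⟩)) (p.mapLe le_sup_left)).IsCycle := by
    rw [Walk.cons_isCycle_iff, Walk.edges_mapLe_eq_edges]
    exact ⟨hp.mapLe _, fun h => hab (T.mem_edgeSet.mp (Sym2.eq_swap ▸ p.edges_subset_edgeSet h))⟩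
  have huw : (T.deleteEdges {s(u, w)} ⊔ edge a b).Reachable u w := by
    refine (adj_and_reachable_delete_edges_iff_exists_cycle.mpr ⟨_, _, hcycle, ?_⟩).2.mono ?_
    · rw [Walk.edges_cons, Walk.edges_mapLe_eq_edges]
      exact List.mem_cons_of_mem _ he
    · rw [deleteEdges_sup]
      exact sup_le_sup_left (deleteEdges_le _) _
  have hreach : T.Reachable ≤ (T.deleteEdges {s(u, w)} ⊔ edge a b).Reachable := by
    refine reachable_le_of_adj_le_reachable fun x y hxy => ?_
    by_cases hxy' : s(x, y) = s(u, w)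
    · rcases Sym2.eq_iff.mp hxy' with ⟨rfl, rfl⟩ | ⟨rfl, rfl⟩
      exacts [huw, huw.symm]
    · exact Adj.reachable (Or.inl (deleteEdges_adj.mpr ⟨hxy, hxy'⟩))
  have := hT.connected.nonempty
  refine ⟨⟨fun x y => hreach _ _ (hT.connected.preconnected x y)⟩,
    (hT.isAcyclic.anti (deleteEdges_le _)).sup_edge_of_not_reachable fun hab' => ?_⟩
  -- if `a` and `b` were already joined, `s(u, w)` would not be a bridge of `T`
  have hbridge := isAcyclic_iff_forall_isBridge.mp hT.isAcyclic (p.edges_subset_edgeSet he)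
  rw [isBridge_iff] at hbridge
  exact hbridge (reachable_sup_edge_of_reachable hab' ▸ huw)

theorem Connected.exists_isTree_walk_of_not_isAcyclic {K : SimpleGraph V} (hG : G.Connected)
    (hKG : K ≤ G) (hK : ¬K.IsAcyclic) :
    ∃ T ≤ G, T.IsTree ∧ ∃ a b, K.Adj a b ∧ ¬T.Adj a b ∧
      ∃ p : T.Walk a b, p.IsPath ∧ ∀ e ∈ p.edges, e ∈ K.edgeSet := by
  obtain ⟨F, hFK, hF, hFreach⟩ := K.exists_isAcyclic_reachable_eq_le
  obtain ⟨a, b, hKab, hFab⟩ : ∃ a b, K.Adj a b ∧ ¬F.Adj a b := by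
    by_contra! h
    exact hK (hF.anti fun a b => h a b)
  obtain ⟨T, hFT, hTG, hT⟩ := hG.exists_isTree_le_of_le_of_isAcyclic (hFK.trans hKG) hF
  obtain ⟨p, hp⟩ := (hFreach ▸ hKab.reachable : F.Reachable a b).exists_isPath
  refine ⟨T, hTG, hT, a, b, hKab, hT.isAcyclic.not_adj_of_reachable hFT p.reachable hFab,
    p.mapLe hFT, hp.mapLe hFT, fun e he => ?_⟩
  rw [Walk.edges_mapLe_eq_edges] at he
  exact edgeSet_mono hFK (p.edges_subset_edgeSet he)

section OrientedIncidence

variable [Fintype V] [DecidableEq V] [DecidableRel G.Adj] (R : Type*) [Ring R]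

def orientedIncMatrix (ori : G.edgeFinset → V × V) : Matrix V G.edgeFinset R :=
  Matrix.of fun v e => if v = (ori e).1 then 1 else if v = (ori e).2 then -1 else 0

variable {R} {ori : G.edgeFinset → V × V}

theorem vecMul_orientedIncMatrix (φ : V → R) {e : G.edgeFinset} (he : (ori e).1 ≠ (ori e).2) :
    Matrix.vecMul φ (orientedIncMatrix R ori) e = φ (ori e).1 - φ (ori e).2 := by
  simp [Matrix.vecMul, dotProduct, orientedIncMatrix, mul_ite, Finset.sum_ite, Finset.filter_ne',
    Finset.filter_eq', he.symm, sub_eq_add_neg]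

theorem eq_zero_of_isBridge_of_mulVec_eq_zero (hori : ∀ e, Sym2.mk (ori e).1 (ori e).2 = e.1)
    {g : G.edgeFinset → R} (hg : (orientedIncMatrix R ori).mulVec g = 0)
    (hsupp : ∀ e, g e ≠ 0 → e.1 ∈ H.edgeSet) {e : G.edgeFinset} (he : H.IsBridge e.1) :
    g e = 0 := by
  classical
  have hloop : ∀ i, (ori i).1 ≠ (ori i).2 := fun i =>
    (G.mem_edgeSet.mp (hori i ▸ mem_edgeFinset.mp i.2)).ne
  have hbridge : ¬(H.deleteEdges {e.1}).Reachable (ori e).1 (ori e).2 := by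
    rw [← hori e] at he
    rwa [isBridge_iff, hori e] at he
  set D := H.deleteEdges {e.1}
  -- the net flow out of the side of the cut `D` containing `(ori e).1` is `g e` alone
  let φ : V → R := fun v => if D.Reachable (ori e).1 v then 1 else 0
  have hcut : ∑ i, (φ (ori i).1 - φ (ori i).2) * g i = 0 :=
    calc ∑ i, (φ (ori i).1 - φ (ori i).2) * g i
        = Matrix.vecMul φ (orientedIncMatrix R ori) ⬝ᵥ g := by
          simp only [dotProduct, vecMul_orientedIncMatrix _ (hloop _)]
      _ = φ ⬝ᵥ (orientedIncMatrix R ori).mulVec g := (Matrix.dotProduct_mulVec ..).symm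
      _ = 0 := by rw [hg, dotProduct_zero]
  rw [Finset.sum_eq_single e] at hcut
  · simpa [φ, hbridge] using hcut
  · intro i _ hie
    by_cases hgi : g i = 0
    · rw [hgi, mul_zero]
    have hadj : D.Adj (ori i).1 (ori i).2 := by
      refine deleteEdges_adj.mpr ⟨?_, ?_⟩
      · rw [← mem_edgeSet, hori]
        exact hsupp i hgi
      · rw [hori, Set.mem_singleton_iff]
        exact fun h => hie (Subtype.ext h)
    have : D.Reachable (ori e).1 (ori i).1 ↔ D.Reachable (ori e).1 (ori i).2 :=
      ⟨fun h => h.trans hadj.reachable, fun h => h.trans hadj.reachable.symm⟩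
    simp [φ, this]
  · simp

theorem IsAcyclic.eq_of_mulVec_eq_of_notMem_edges (hori : ∀ e, Sym2.mk (ori e).1 (ori e).2 = e.1)
    {a b : V} (hT : T.IsAcyclic) (p : T.Walk a b) {f f' : G.edgeFinset → R}
    (hf : ∀ e, f e ≠ 0 → e.1 ∈ (T ⊔ edge a b).edgeSet)
    (hf' : ∀ e, f' e ≠ 0 → e.1 ∈ (T ⊔ edge a b).edgeSet)
    (hff' : (orientedIncMatrix R ori).mulVec f = (orientedIncMatrix R ori).mulVec f')
    {e : G.edgeFinset} (hep : e.1 ∉ p.edges) (heab : e.1 ≠ s(a, b)) : f e = f' e := by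
  have hsupp : ∀ i, (f - f') i ≠ 0 → i.1 ∈ (T ⊔ edge a b).edgeSet := by
    intro i hi
    by_cases hfi : f i = 0
    · exact hf' i fun h => hi (by simp [hfi, h])
    · exact hf i hfi
  by_contra hne
  have heT : e.1 ∈ T.edgeSet := by
    rcases (edgeSet_sup .. ▸ hsupp e (sub_ne_zero.mpr hne) :) with h | h
    · exact h
    · exact absurd (Set.mem_singleton_iff.mp (edgeSet_edge_subset h)) heab
  refine sub_ne_zero.mpr hne (eq_zero_of_isBridge_of_mulVec_eq_zero hori ?_ hsupp
    (hT.isBridge_sup_edge heT p hep))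
  rw [Matrix.mulVec_sub, hff', sub_self]

end OrientedIncidence

end SimpleGraph

open SimpleGraph

theorem stmt_19_general {V : Type*} [Fintype V] [DecidableEq V]
    (G : SimpleGraph V) [DecidableRel G.Adj] (hG : G.Connected) (r : V)
    (ori : {e : Sym2 V // e ∈ G.edgeFinset} → V × V)
    (hori : ∀ e, Sym2.mk (ori e).1 (ori e).2 = e.1)
    (M : Finset (Sym2 V))
    (hM : ¬ (G.deleteEdges (M : Set (Sym2 V))).IsAcyclic) :
    ∃ T T' : SimpleGraph V, T ≤ G ∧ T.IsTree ∧ T' ≤ G ∧ T'.IsTree ∧ T ≠ T' ∧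
      ∀ x : V → ℝ, ∀ f f' : {e : Sym2 V // e ∈ G.edgeFinset} → ℝ,
        (∀ e, f e ≠ 0 → e.1 ∈ T.edgeSet) →
        (∀ e, f' e ≠ 0 → e.1 ∈ T'.edgeSet) →
        ((Matrix.of fun (v : V) (e : {e : Sym2 V // e ∈ G.edgeFinset}) =>
            if v = (ori e).1 then (1 : ℝ) else if v = (ori e).2 then -1 else 0).mulVec f
          = fun v => if v = r then ∑ u ∈ Finset.univ.erase r, x u else -x v) →
        ((Matrix.of fun (v : V) (e : {e : Sym2 V // e ∈ G.edgeFinset}) =>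
            if v = (ori e).1 then (1 : ℝ) else if v = (ori e).2 then -1 else 0).mulVec f'
          = fun v => if v = r then ∑ u ∈ Finset.univ.erase r, x u else -x v) →
        ∀ e : {e : Sym2 V // e ∈ G.edgeFinset}, e.1 ∈ M → f e = f' e := by
  obtain ⟨T, hTG, hT, a, b, hab, hTab, p, hp, hpM⟩ :=
    hG.exists_isTree_walk_of_not_isAcyclic (deleteEdges_le _) hM
  simp only [edgeSet_deleteEdges, Set.mem_sdiff, Finset.mem_coe] at hpM
  obtain ⟨ε, hε⟩ := List.exists_mem_of_ne_nil p.edges <| by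
    rw [Ne, Walk.edges_eq_nil]
    exact Walk.not_nil_of_ne hab.ne
  have hedge : (edge a b).Adj a b := (edge_adj ..).mpr ⟨Or.inl ⟨rfl, rfl⟩, hab.ne⟩
  refine ⟨T, T.deleteEdges {ε} ⊔ edge a b, hTG, hT,
    sup_le ((deleteEdges_le _).trans hTG) (G.edge_le_iff.mpr (Or.inr (deleteEdges_le _ hab))),
    hT.sup_edge_deleteEdges p hp hTab hε, fun h => hTab (h ▸ Or.inr hedge), ?_⟩
  intro x f f' hf hf' hBf hBf' e heM
  refine hT.isAcyclic.eq_of_mulVec_eq_of_notMem_edges (ori := ori) hori p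
    (fun i hi => edgeSet_mono le_sup_left (hf i hi))
    (fun i hi => edgeSet_mono (sup_le_sup_right (deleteEdges_le _) _) (hf' i hi))
    (hBf.trans hBf'.symm) (fun h => (hpM _ h).2 heM) fun h => (deleteEdges_adj.mp hab).2 (h ▸ heM)

/-- Necessity: if the unmeasured part `E(G) \ M` of a finite connected graph `G` contains a
cycle (so some cycle of `G` carries no sensor), then there are two distinct spanning trees
`T ≠ T'` whose routed flows coincide on every measured edge for every injection vector `x`.
Flows are defined by conservation: `f` is supported on the tree edges and `B f = y` with
`y r = ∑_{v ≠ r} x v` and `y v = -x v` otherwise, for the signed incidence matrix `B` of an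
arbitrary orientation. -/
theorem stmt_19 {V : Type*} [Fintype V] [DecidableEq V]
    (G : SimpleGraph V) [DecidableRel G.Adj] (hG : G.Connected) (r : V)
    (ori : {e : Sym2 V // e ∈ G.edgeFinset} → V × V)
    (hori : ∀ e, Sym2.mk (ori e).1 (ori e).2 = e.1)
    (M : Finset (Sym2 V)) (hMG : M ⊆ G.edgeFinset)
    (hM : ¬ (G.deleteEdges (M : Set (Sym2 V))).IsAcyclic) :
    ∃ T T' : SimpleGraph V, T ≤ G ∧ T.IsTree ∧ T' ≤ G ∧ T'.IsTree ∧ T ≠ T' ∧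
      ∀ x : V → ℝ, ∀ f f' : {e : Sym2 V // e ∈ G.edgeFinset} → ℝ,
        (∀ e, f e ≠ 0 → e.1 ∈ T.edgeSet) →
        (∀ e, f' e ≠ 0 → e.1 ∈ T'.edgeSet) →
        ((Matrix.of fun (v : V) (e : {e : Sym2 V // e ∈ G.edgeFinset}) =>
            if v = (ori e).1 then (1 : ℝ) else if v = (ori e).2 then -1 else 0).mulVec f
          = fun v => if v = r then ∑ u ∈ Finset.univ.erase r, x u else -x v) →
        ((Matrix.of fun (v : V) (e : {e : Sym2 V // e ∈ G.edgeFinset}) =>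
            if v = (ori e).1 then (1 : ℝ) else if v = (ori e).2 then -1 else 0).mulVec f'
          = fun v => if v = r then ∑ u ∈ Finset.univ.erase r, x u else -x v) →
        ∀ e : {e : Sym2 V // e ∈ G.edgeFinset}, e.1 ∈ M → f e = f' e :=
  stmt_19_general G hG r ori hori M hM
end
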